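/- (De Giorgi iteration lemma.) Let α > 0, C > 0 and B > 1, and let (x_i)_{i≥0} be a sequence of positive real numbers satisfying x_{i+1} ≤ C·B^i·x_i^{1+α} for all i ≥ 0. If x_0 ≤ C^{−1/α}·B^{−1/α²}, then lim_{i→∞} x_i = 0. -/

import Mathlib

/-!
With `r = B^{-1/α}` and `M = C^{-1/α} B^{-1/α²}` one has `C M^α = r` and `B r^α = 1`, and these
two identities make the geometric bound `x_i ≤ M r^i` propagate through the recursion:
`C B^i (M r^i)^{1+α} = M r^i · (C M^α) · (B r^α)^i = M r^{i+1}`. Since `B > 1`, `r < 1`.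
-/

open Filter

theorem le_mul_pow_of_succ_le_mul_pow_mul_rpow {α C B M r : ℝ} {x : ℕ → ℝ}
    (hα : 0 ≤ α) (hC : 0 ≤ C) (hB : 0 ≤ B) (hM : 0 ≤ M) (hr : 0 ≤ r) (hx : ∀ i, 0 ≤ x i)
    (hrec : ∀ i, x (i + 1) ≤ C * B ^ i * x i ^ (1 + α))
    (hCM : C * M ^ α = r) (hBr : B * r ^ α = 1) (h0 : x 0 ≤ M) (i : ℕ) :
    x i ≤ M * r ^ i := by
  induction i with
  | zero => simpa using h0
  | succ i ih =>
    calc x (i + 1) ≤ C * B ^ i * x i ^ (1 + α) := hrec i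
      _ ≤ C * B ^ i * (M * r ^ i) ^ (1 + α) := by gcongr; exact hx i
      _ = M * r ^ i * (C * M ^ α) * (B * r ^ α) ^ i := by
        rw [Real.rpow_one_add' (by positivity) (by linarith), Real.mul_rpow hM (by positivity),
          ← Real.rpow_pow_comm hr, mul_pow]
        ring
      _ = M * r ^ (i + 1) := by rw [hCM, hBr, one_pow, pow_succ]; ring

/-- **De Giorgi iteration lemma**: if `x_{i+1} ≤ C B^i x_i^{1+α}` with `B > 1`,
`C > 0`, `α > 0`, and `x₀ ≤ C^{−1/α} B^{−1/α²}`, then `x_i → 0`. -/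
theorem deGiorgi_iteration
    (α C B : ℝ) (hα : 0 < α) (hC : 0 < C) (hB : 1 < B)
    (x : ℕ → ℝ) (hx : ∀ i, 0 < x i)
    (hrec : ∀ i, x (i + 1) ≤ C * B ^ i * x i ^ (1 + α))
    (h0 : x 0 ≤ C ^ (-(1 / α)) * B ^ (-(1 / α ^ 2))) :
    Tendsto x atTop (nhds 0) := by
  set r := B ^ (-(1 / α))
  set M := C ^ (-(1 / α)) * B ^ (-(1 / α ^ 2))
  have hB0 : 0 < B := one_pos.trans hB
  have hr1 : r < 1 := Real.rpow_lt_one_of_one_lt_of_neg hB (by simpa using hα)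
  have hα_cancel : -(1 / α) * α = -1 := by field_simp
  have hCM : C * M ^ α = r := by
    rw [Real.mul_rpow (by positivity) (by positivity), ← Real.rpow_mul hC.le,
      ← Real.rpow_mul hB0.le, hα_cancel, show -(1 / α ^ 2) * α = -(1 / α) by field_simp,
      Real.rpow_neg_one, ← mul_assoc, mul_inv_cancel₀ hC.ne', one_mul]
  have hBr : B * r ^ α = 1 := by
    rw [← Real.rpow_mul hB0.le, hα_cancel, Real.rpow_neg_one, mul_inv_cancel₀ hB0.ne']
  have hbound := le_mul_pow_of_succ_le_mul_pow_mul_rpow hα.le hC.le hB0.le (by positivity)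
    (by positivity) (fun i => (hx i).le) hrec hCM hBr h0
  have hgeom : Tendsto (fun i : ℕ => M * r ^ i) atTop (nhds 0) := by
    simpa using (tendsto_pow_atTop_nhds_zero_of_lt_one (by positivity) hr1).const_mul M
  exact squeeze_zero (fun i => (hx i).le) hbound hgeom
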